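/- With notation as in the context: if N is a subgroup of C that is normal in A and invariant under ι (equivalently, normal in B = C ⋊ ⟨ι⟩), then N = 1. -/

import Mathlib

/-!
Conjugating `n ∈ N` by elements of `A`, whose first coordinates run over all of `L`, shows that
the first coordinate of `n` lies in every conjugate of `L_λ`, hence is trivial because `L` is
faithful and transitive. The same conjugations carry the value of a coordinate at one point of
`S` to any other point, so a coordinate of `N` that vanishes somewhere vanishes everywhere.
Since `N` is `ι`-invariant, coordinate `f₁` vanishes at `1` (it gives the first coordinate of
`ι n`), and `ι` moves coordinate `f_{i+1}` into `f_i` on `S_δ` for even `i` and off `S_δ` for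
odd `i`; as `K` is intransitive, `S_δ ≠ S`, so the coordinates vanish one after another.
-/

open MulAction

section DeltaAction

variable {Λ L : Type} [Group L] [MulAction L Λ] (K : Subgroup L) [K.Normal]

/-- The action of `L` on the set `Δ` of orbits of a normal subgroup `K` on `Λ`. -/
def deltaSmul (g : L) (q : orbitRel.Quotient K Λ) : orbitRel.Quotient K Λ :=
  Quotient.map' (fun x => g • x) (by
    rintro a b ⟨k, hk⟩
    refine ⟨⟨g * k * g⁻¹, Subgroup.Normal.conj_mem ‹K.Normal› (k : L) k.2 g⟩, ?_⟩
    show (g * (k : L) * g⁻¹) • (g • b) = g • a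
    have hk' : (k : L) • b = a := hk
    rw [← hk', smul_smul, smul_smul]
    congr 1
    group) q

lemma deltaSmul_mk (g : L) (a : Λ) :
    deltaSmul K g (Quotient.mk'' a) = (Quotient.mk'' (g • a) : orbitRel.Quotient K Λ) := rfl

/-- `L` acts on the set of orbits of a normal subgroup `K`. -/
instance deltaAction : MulAction L (orbitRel.Quotient K Λ) where
  smul := deltaSmul K
  one_smul q := Quotient.inductionOn' q fun a => by
    show deltaSmul K 1 (Quotient.mk'' a) = Quotient.mk'' a
    rw [deltaSmul_mk, one_smul]
  mul_smul g h q := Quotient.inductionOn' q fun a => by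
    show deltaSmul K (g * h) (Quotient.mk'' a) = deltaSmul K g (deltaSmul K h (Quotient.mk'' a))
    rw [deltaSmul_mk, deltaSmul_mk, deltaSmul_mk, mul_smul]

end DeltaAction

section Ctx

variable (Λ L : Type) [Group L] [MulAction L Λ] (K : Subgroup L) [K.Normal]

/-- The homomorphism from `L` to the symmetric group of the orbit set `Δ`. -/
def rhoHom : L →* Equiv.Perm (orbitRel.Quotient K Λ) :=
  MulAction.toPermHom L (orbitRel.Quotient K Λ)

/-- `S`, the permutation group induced by `L` on the orbit set `Δ`. -/
def Sgrp : Subgroup (Equiv.Perm (orbitRel.Quotient K Λ)) := (rhoHom Λ L K).range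

/-- The natural projection `π : L → S`. -/
def piHom : L →* ↥(Sgrp Λ L K) := (rhoHom Λ L K).rangeRestrict

variable (lam : Λ)

/-- The orbit `δ ∈ Δ` of the point `λ`. -/
def deltaPt : orbitRel.Quotient K Λ := Quotient.mk'' lam

/-- The stabiliser `S_δ` of `δ` in `S`. -/
def Sdel : Subgroup ↥(Sgrp Λ L K) := stabilizer ↥(Sgrp Λ L K) (deltaPt Λ L K lam)

/-- The point stabiliser `L_λ`. -/
def Llam : Subgroup L := stabilizer L lam

/-- `K_λ`, the stabiliser of `λ` in `K`. -/
def Klam : Subgroup L := K ⊓ stabilizer L lam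

end Ctx

section Wr

variable {G H : Type*} [Group G] [Group H]

/-- The underlying type of the twisted product `(H → G)^m ⋊ G` used in the construction:
elements are tuples `(g, f₁, …, f_m)` with `g ∈ G` and `f_i : H → G`, multiplied by
`(g, f₁, …, f_m)(g', h₁, …, h_m) = (g g', f₁^{g'} h₁, …, f_m^{g'} h_m)`, where
`f^{g'}(x) = f(x · (p g')⁻¹)`. -/
@[ext]
structure Wr (p : G →* H) (m : ℕ) where
  fst : G
  snd : Fin m → H → G

namespace Wr

variable {p : G →* H} {m : ℕ}

instance : One (Wr p m) := ⟨⟨1, fun _ _ => 1⟩⟩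
instance : Mul (Wr p m) :=
  ⟨fun a b => ⟨a.fst * b.fst, fun i x => a.snd i (x * (p b.fst)⁻¹) * b.snd i x⟩⟩
instance : Inv (Wr p m) := ⟨fun a => ⟨a.fst⁻¹, fun i x => (a.snd i (x * p a.fst))⁻¹⟩⟩

@[simp] lemma one_fst : (1 : Wr p m).fst = 1 := rfl
@[simp] lemma one_snd (i : Fin m) (x : H) : (1 : Wr p m).snd i x = 1 := rfl
@[simp] lemma mul_fst (a b : Wr p m) : (a * b).fst = a.fst * b.fst := rfl
@[simp] lemma mul_snd (a b : Wr p m) (i : Fin m) (x : H) :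
    (a * b).snd i x = a.snd i (x * (p b.fst)⁻¹) * b.snd i x := rfl
@[simp] lemma inv_fst (a : Wr p m) : (a⁻¹).fst = a.fst⁻¹ := rfl
@[simp] lemma inv_snd (a : Wr p m) (i : Fin m) (x : H) :
    (a⁻¹).snd i x = (a.snd i (x * p a.fst))⁻¹ := rfl

instance : Group (Wr p m) where
  mul_assoc a b c := by
    refine Wr.ext (mul_assoc ..) ?_
    funext i x
    simp [mul_assoc]
  one_mul a := by
    refine Wr.ext (one_mul _) ?_
    funext i x
    simp
  mul_one a := by
    refine Wr.ext (mul_one _) ?_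
    funext i x
    simp
  inv_mul_cancel a := by
    refine Wr.ext (inv_mul_cancel _) ?_
    funext i x
    simp

end Wr

end Wr

/-- The projection `(g, f₁, …, f_m) ↦ g`. -/
def Wr.fstHom {G H : Type*} [Group G] [Group H] (p : G →* H) (m : ℕ) : Wr p m →* G where
  toFun := Wr.fst
  map_one' := rfl
  map_mul' := fun _ _ => rfl

section ASubgroup

open MulAction

variable (Λ L : Type) [Fintype Λ] [Group L] [Finite L] [MulAction L Λ]
  (K : Subgroup L) [K.Normal] (lam : Λ)
  (τ : ↥(Sgrp Λ L K) → ↥(Sgrp Λ L K)) (m : ℕ)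

/-- The subgroup `Ω^m ⋊ L` inside the twisted product: the tuples `(g, f₁, …, f_m)` where
each `f_i` lies in `Ω`, i.e. takes values in `L_λ` and is constant on the right cosets of
`S_δ` in `S`. -/
def OmegaML : Subgroup (Wr (piHom Λ L K) m) where
  carrier := {w | ∀ i, (∀ x, w.snd i x ∈ stabilizer L lam) ∧
    ∀ y ∈ Sdel Λ L K lam, ∀ x, w.snd i (y * x) = w.snd i x}
  one_mem' := fun i => ⟨fun x => Subgroup.one_mem _, fun y hy x => rfl⟩
  mul_mem' := by
    rintro a b ha hb
    refine fun i => ⟨fun x => ?_, fun y hy x => ?_⟩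
    · simp only [Wr.mul_snd]
      exact mul_mem ((ha i).1 _) ((hb i).1 x)
    · simp only [Wr.mul_snd]
      rw [mul_assoc, (ha i).2 y hy, (hb i).2 y hy]
  inv_mem' := by
    rintro a ha
    refine fun i => ⟨fun x => ?_, fun y hy x => ?_⟩
    · simp only [Wr.inv_snd]
      exact inv_mem ((ha i).1 _)
    · simp only [Wr.inv_snd]
      rw [mul_assoc, (ha i).2 y hy]

/-- The set `A`: tuples `(g, f₁, …, f_m)` with `g ∈ L`, each `f_i ∈ Ω`
(i.e. `f_i` takes values in `L_λ` and is constant on right cosets of `S_δ`), and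
`(f_i(x))^π = (x (g^π)⁻¹)^τ · g^π · (x^τ)⁻¹` for all `x ∈ S`. -/
def Aset : Set (Wr (piHom Λ L K) m) :=
  {w | (∀ i x, w.snd i x ∈ stabilizer L lam) ∧
    (∀ i, ∀ y ∈ Sdel Λ L K lam, ∀ x, w.snd i (y * x) = w.snd i x) ∧
    (∀ i x, piHom Λ L K (w.snd i x) =
      τ (x * (piHom Λ L K w.fst)⁻¹) * piHom Λ L K w.fst * (τ x)⁻¹)}

/-- `A` as a subgroup of `Ω^m ⋊ L`. -/
def Asub : Subgroup (Wr (piHom Λ L K) m) where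
  carrier := Aset Λ L K lam τ m
  one_mem' := by
    refine ⟨fun i x => ?_, fun i y hy x => rfl, fun i x => ?_⟩
    · simp only [Wr.one_snd]
      exact Subgroup.one_mem _
    · simp
  mul_mem' := by
    rintro a b ⟨ha1, ha2, ha3⟩ ⟨hb1, hb2, hb3⟩
    refine ⟨fun i x => ?_, fun i y hy x => ?_, fun i x => ?_⟩
    · simp only [Wr.mul_snd]
      exact mul_mem (ha1 i _) (hb1 i x)
    · simp only [Wr.mul_snd]
      rw [mul_assoc, ha2 i y hy, hb2 i y hy]
    · simp only [Wr.mul_snd, Wr.mul_fst, map_mul]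
      rw [ha3 i, hb3 i,
        show x * (piHom Λ L K a.fst * piHom Λ L K b.fst)⁻¹ =
          x * (piHom Λ L K b.fst)⁻¹ * (piHom Λ L K a.fst)⁻¹ from by
            rw [mul_inv_rev, ← mul_assoc]]
      group
  inv_mem' := by
    rintro a ⟨h1, h2, h3⟩
    refine ⟨fun i x => ?_, fun i y hy x => ?_, fun i x => ?_⟩
    · simp only [Wr.inv_snd]
      exact inv_mem (h1 i _)
    · simp only [Wr.inv_snd]
      rw [mul_assoc, h2 i y hy]
    · simp only [Wr.inv_snd, Wr.inv_fst, map_inv]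
      rw [h3 i (x * piHom Λ L K a.fst), mul_inv_cancel_right, inv_inv]
      group

/-- The subgroup `C = {(g, f₁, …, f_m) ∈ A | g ∈ L_λ}` of `A`. -/
def Csub : Subgroup (Wr (piHom Λ L K) m) :=
  Asub Λ L K lam τ m ⊓ Subgroup.comap (Wr.fstHom (piHom Λ L K) m) (stabilizer L lam)

end ASubgroup

section Iota

open MulAction

variable (Λ L : Type) [Fintype Λ] [Group L] [Finite L] [MulAction L Λ]
  (K : Subgroup L) [K.Normal] (lam : Λ) (m : ℕ)

open scoped Classical in
/-- The map `ι` on `C`: for `c = (g, f₁, …, f_m)`, `c^ι = (f₁(1), f₁^{ι₁,c}, …, f_m^{ι_m,c})`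
defined case-by-case as in the construction (indices are shifted by one: the component of
index `i : Fin m` is `f_{i+1}` in the notation of the paper). -/
noncomputable def iotaW (hm0 : 0 < m) (w : Wr (piHom Λ L K) m) : Wr (piHom Λ L K) m :=
  ⟨w.snd ⟨0, hm0⟩ 1, fun i x =>
    if x ∈ Sdel Λ L K lam then
      if i.val = 0 then w.fst
      else if i.val % 2 = 1 then (if h : i.val + 1 < m then w.snd ⟨i.val + 1, h⟩ x else 1)
      else (if h : i.val - 1 < m then w.snd ⟨i.val - 1, h⟩ x else 1)
    else
      if i.val % 2 = 1 then (if h : i.val - 1 < m then w.snd ⟨i.val - 1, h⟩ x else 1)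
      else if i.val = m - 1 then w.snd i x
      else (if h : i.val + 1 < m then w.snd ⟨i.val + 1, h⟩ x else 1)⟩

end Iota

section Orbits

variable {Λ L : Type} [Group L] [MulAction L Λ] {K : Subgroup L} [K.Normal]

lemma piHom_surjective : Function.Surjective (piHom Λ L K) :=
  MonoidHom.rangeRestrict_surjective _

lemma piHom_eq_one_of_mem {k : L} (hk : k ∈ K) : piHom Λ L K k = 1 := by
  refine Subtype.ext (Equiv.ext fun q => ?_)
  induction q using Quotient.inductionOn' with
  | h a => exact Quotient.sound' ⟨⟨k, hk⟩, rfl⟩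

lemma piHom_mem_Sdel_iff {lam : Λ} {g : L} :
    piHom Λ L K g ∈ Sdel Λ L K lam ↔ g • lam ∈ orbit K lam :=
  Quotient.eq''

lemma exists_mem_stabilizer_piHom_eq {lam : Λ} {s : Sgrp Λ L K} (hs : s ∈ Sdel Λ L K lam) :
    ∃ l ∈ stabilizer L lam, piHom Λ L K l = s := by
  obtain ⟨g, rfl⟩ := piHom_surjective s
  obtain ⟨k, hk⟩ := piHom_mem_Sdel_iff.mp hs
  refine ⟨(k : L)⁻¹ * g, ?_, ?_⟩
  · rw [mem_stabilizer_iff, mul_smul, ← hk]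
    exact inv_smul_smul (k : L) lam
  · rw [map_mul, map_inv, piHom_eq_one_of_mem k.2, inv_one, one_mul]

lemma exists_notMem_Sdel [IsPretransitive L Λ] (hK : ¬ IsPretransitive K Λ) (lam : Λ) :
    ∃ s, s ∉ Sdel Λ L K lam := by
  by_contra! hS
  refine hK (IsPretransitive.of_orbit (x₀ := lam) fun μ => ?_)
  obtain ⟨g, rfl⟩ := exists_smul_eq L lam μ
  exact piHom_mem_Sdel_iff.mp (hS _)

end Orbits

lemma eq_one_of_forall_conj_mem_stabilizer {Λ L : Type*} [Group L] [MulAction L Λ]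
    [FaithfulSMul L Λ] [IsPretransitive L Λ] {lam : Λ} {g : L}
    (hg : ∀ h : L, h⁻¹ * g * h ∈ stabilizer L lam) : g = 1 :=
  eq_of_smul_eq_smul fun μ => by
    obtain ⟨h, rfl⟩ := exists_smul_eq L lam μ
    have hfix : (h⁻¹ * g * h) • lam = lam := hg h
    calc g • h • lam = h • (h⁻¹ * g * h) • lam := by simp [smul_smul, mul_assoc]
      _ = (1 : L) • h • lam := by rw [hfix, one_smul]

section Transversal

variable {S : Type*} [Group S] {H : Subgroup S} {τ : S → S}

lemma transversal_mul_left {T : Set S} (hτT : ∀ s, τ s ∈ T) (hτcoset : ∀ s, s * (τ s)⁻¹ ∈ H)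
    (hτuniq : ∀ s t, t ∈ T → s * t⁻¹ ∈ H → t = τ s) {y : S} (hy : y ∈ H) (s : S) :
    τ (y * s) = τ s :=
  (hτuniq _ _ (hτT s) (by rw [mul_assoc]; exact mul_mem hy (hτcoset s))).symm

lemma transversal_cocycle_mem (hτcoset : ∀ s, s * (τ s)⁻¹ ∈ H) (s x : S) :
    τ (x * s⁻¹) * s * (τ x)⁻¹ ∈ H := by
  have e : τ (x * s⁻¹) * s * (τ x)⁻¹ = (x * s⁻¹ * (τ (x * s⁻¹))⁻¹)⁻¹ * (x * (τ x)⁻¹) := by group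
  rw [e]
  exact mul_mem (inv_mem (hτcoset _)) (hτcoset x)

end Transversal

namespace Wr

variable {G H : Type*} [Group G] [Group H] {p : G →* H} {m : ℕ}

lemma conj_snd_of_fst_eq_one {a n : Wr p m} (hn : n.fst = 1) (i : Fin m) (x : H) :
    (a⁻¹ * n * a).snd i x = (a.snd i x)⁻¹ * n.snd i (x * (p a.fst)⁻¹) * a.snd i x := by
  simp [hn, mul_assoc]

lemma snd_eq_one_of_eq_one_at (hp : Function.Surjective p) {A N : Subgroup (Wr p m)}
    (hA : ∀ g, ∃ a ∈ A, a.fst = g) (hN : ∀ a ∈ A, ∀ n ∈ N, a⁻¹ * n * a ∈ N)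
    (hfst : ∀ n ∈ N, n.fst = 1) {i : Fin m} {x₀ : H} (h₀ : ∀ n ∈ N, n.snd i x₀ = 1)
    {n : Wr p m} (hn : n ∈ N) (y : H) : n.snd i y = 1 := by
  obtain ⟨g, hg⟩ := hp (y⁻¹ * x₀)
  obtain ⟨a, ha, rfl⟩ := hA g
  have h := h₀ _ (hN a ha n hn)
  rw [conj_snd_of_fst_eq_one (hfst n hn), hg, show x₀ * (y⁻¹ * x₀)⁻¹ = y by group] at h
  exact (conj_eq_one_iff (a := (a.snd i x₀)⁻¹)).mp (by rwa [inv_inv])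

end Wr

section ASubgroup

variable {Λ L : Type} [Group L] [MulAction L Λ] {K : Subgroup L} [K.Normal] {lam : Λ}
  {τ : Sgrp Λ L K → Sgrp Λ L K}

lemma exists_mem_Asub_fst_eq {T : Set (Sgrp Λ L K)} (hτT : ∀ s, τ s ∈ T)
    (hτcoset : ∀ s, s * (τ s)⁻¹ ∈ Sdel Λ L K lam)
    (hτuniq : ∀ s t, t ∈ T → s * t⁻¹ ∈ Sdel Λ L K lam → t = τ s) (m : ℕ) (g : L) :
    ∃ a ∈ Asub Λ L K lam τ m, a.fst = g := by
  choose ℓ hℓ using fun s : Sdel Λ L K lam => exists_mem_stabilizer_piHom_eq s.2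
  let c : Sgrp Λ L K → Sdel Λ L K lam := fun x =>
    ⟨_, transversal_cocycle_mem hτcoset (piHom Λ L K g) x⟩
  refine ⟨⟨g, fun _ x => ℓ (c x)⟩,
    ⟨fun _ x => (hℓ (c x)).1, fun _ y hy x => ?_, fun _ x => (hℓ (c x)).2⟩, rfl⟩
  have hτ := transversal_mul_left hτT hτcoset hτuniq hy
  exact congrArg ℓ (Subtype.ext (by simp only [c, mul_assoc, hτ]))

end ASubgroup

section Iota

variable {Λ L : Type} [Group L] [MulAction L Λ] {K : Subgroup L} [K.Normal] {lam : Λ} {m : ℕ}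
  {hm0 : 0 < m}

lemma iotaW_snd_of_mem_Sdel_of_odd (w : Wr (piHom Λ L K) m) {i : ℕ} (hi : i + 1 < m)
    (hodd : Odd i) {x : Sgrp Λ L K} (hx : x ∈ Sdel Λ L K lam) :
    (iotaW Λ L K lam m hm0 w).snd ⟨i, by omega⟩ x = w.snd ⟨i + 1, hi⟩ x := by
  have hodd' := Nat.odd_iff.mp hodd
  simp only [iotaW, if_pos hx, dif_pos hi, if_pos hodd', show i ≠ 0 by omega, if_false]

lemma iotaW_snd_of_notMem_Sdel_of_even (w : Wr (piHom Λ L K) m) {i : ℕ} (hi : i + 1 < m)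
    (heven : Even i) {x : Sgrp Λ L K} (hx : x ∉ Sdel Λ L K lam) :
    (iotaW Λ L K lam m hm0 w).snd ⟨i, by omega⟩ x = w.snd ⟨i + 1, hi⟩ x := by
  have heven' := Nat.even_iff.mp heven
  simp only [iotaW, if_neg hx, dif_pos hi, show i % 2 ≠ 1 by omega, show i ≠ m - 1 by omega,
    if_false]

lemma snd_eq_one_of_iotaW_mem {N : Subgroup (Wr (piHom Λ L K) m)}
    (hNiota : ∀ n ∈ N, iotaW Λ L K lam m hm0 n ∈ N) (hfst : ∀ n ∈ N, n.fst = 1)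
    {x₀ : Sgrp Λ L K} (hx₀ : x₀ ∉ Sdel Λ L K lam)
    (hext : ∀ i x, (∀ n ∈ N, n.snd i x = 1) → ∀ n ∈ N, ∀ y, n.snd i y = 1) :
    ∀ (i : ℕ) (hi : i < m), ∀ n ∈ N, ∀ x, n.snd ⟨i, hi⟩ x = 1
  | 0, hi => hext _ 1 fun n hn => hfst _ (hNiota n hn)
  | i + 1, hi => by
    have ih := snd_eq_one_of_iotaW_mem hNiota hfst hx₀ hext i (by omega)
    rcases Nat.even_or_odd i with heven | hodd
    · refine hext _ x₀ fun n hn => ?_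
      rw [← iotaW_snd_of_notMem_Sdel_of_even n hi heven hx₀]
      exact ih _ (hNiota n hn) x₀
    · refine hext _ 1 fun n hn => ?_
      rw [← iotaW_snd_of_mem_Sdel_of_odd n hi hodd (one_mem _)]
      exact ih _ (hNiota n hn) 1

end Iota

theorem iota_invariant_normal_subgroup_trivial_general (Λ L : Type) [Group L]
    [MulAction L Λ] [FaithfulSMul L Λ] [MulAction.IsPretransitive L Λ]
    (K : Subgroup L) [K.Normal] (hKint : ¬ MulAction.IsPretransitive ↥K Λ)
    (lam : Λ)
    (T : Set ↥(Sgrp Λ L K))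
    (τ : ↥(Sgrp Λ L K) → ↥(Sgrp Λ L K))
    (hτT : ∀ s, τ s ∈ T) (hτcoset : ∀ s, s * (τ s)⁻¹ ∈ Sdel Λ L K lam)
    (hτuniq : ∀ s t, t ∈ T → s * t⁻¹ ∈ Sdel Λ L K lam → t = τ s)
    (m : ℕ) (hm0 : 0 < m)
    (N : Subgroup (Wr (piHom Λ L K) m))
    (hNC : N ≤ Csub Λ L K lam τ m)
    (hNnormal : ∀ a ∈ Asub Λ L K lam τ m, ∀ n ∈ N, a⁻¹ * n * a ∈ N)
    (hNiota : ∀ n ∈ N, iotaW Λ L K lam m hm0 n ∈ N) :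
    N = ⊥ := by
  have hA := exists_mem_Asub_fst_eq hτT hτcoset hτuniq m
  have hfst : ∀ n ∈ N, n.fst = 1 := fun n hn =>
    eq_one_of_forall_conj_mem_stabilizer fun g => by
      obtain ⟨a, ha, rfl⟩ := hA g
      exact (hNC (hNnormal a ha n hn)).2
  obtain ⟨x₀, hx₀⟩ := exists_notMem_Sdel hKint lam
  have hsnd := snd_eq_one_of_iotaW_mem hNiota hfst hx₀ fun _ _ h₀ _ hn =>
    Wr.snd_eq_one_of_eq_one_at piHom_surjective hA hNnormal hfst h₀ hn
  exact (Subgroup.eq_bot_iff_forall N).mpr fun n hn =>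
    Wr.ext (hfst n hn) (funext fun i => funext (hsnd i i.2 n hn))

/-- **Lemma.** With notation as in the construction, if `N` is a subgroup of `C` which is
normal in `A` and invariant under `ι` (equivalently, normal in `B = C ⋊ ⟨ι⟩`), then
`N = 1`. -/
theorem iota_invariant_normal_subgroup_trivial (Λ L : Type) [Fintype Λ] [Group L]
    [Finite L] [MulAction L Λ] [FaithfulSMul L Λ] [MulAction.IsPretransitive L Λ]
    (K : Subgroup L) [K.Normal] (hKint : ¬ MulAction.IsPretransitive ↥K Λ)
    (hker : (rhoHom Λ L K).ker = K) (lam : Λ)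
    (T : Set ↥(Sgrp Λ L K)) (h1T : (1 : ↥(Sgrp Λ L K)) ∈ T)
    (τ : ↥(Sgrp Λ L K) → ↥(Sgrp Λ L K))
    (hτT : ∀ s, τ s ∈ T) (hτcoset : ∀ s, s * (τ s)⁻¹ ∈ Sdel Λ L K lam)
    (hτuniq : ∀ s t, t ∈ T → s * t⁻¹ ∈ Sdel Λ L K lam → t = τ s)
    (m : ℕ) (hm : Odd m) (hm0 : 0 < m)
    (N : Subgroup (Wr (piHom Λ L K) m))
    (hNC : N ≤ Csub Λ L K lam τ m)
    (hNnormal : ∀ a ∈ Asub Λ L K lam τ m, ∀ n ∈ N, a⁻¹ * n * a ∈ N)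
    (hNiota : ∀ n ∈ N, iotaW Λ L K lam m hm0 n ∈ N) :
    N = ⊥ :=
  iota_invariant_normal_subgroup_trivial_general Λ L K hKint lam T τ hτT hτcoset hτuniq m hm0 N hNC
    hNnormal hNiota
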